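/- arXiv:2106.02628 — 11 statements merged into one kernel-verified Lean document; each statement's English description precedes it below -/
import Mathlib

section
/- Soundness and Completeness of the k-safety encoding C_S (Theorem 1): Let k ≥ 1 and let P_1, …, P_k be programs on state spaces σ_1, …, σ_k with pre- and post-relations pre, post on k-tuples of states. Then the programs satisfy the k-safety property with respect to (pre, post) if and only if the constraint set C_S has a semantic solution, i.e., there exist a predicate inv on k-tuples and predicates sch_A on k-tuples for every nonempty A ⊆ {1, …, k} satisfying clauses (1)–(5) of C_S. -/
/-!
Completeness: if the programs are k-safe, the weakest precondition of `post` is an invariant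
under the scheduler that always runs all programs together (a final program self-loops).
Soundness: given terminating runs from a `pre` state, follow the scheduler along them,
advancing each scheduled component one transition of its run (or its self-loop once its run
is over). Clause (4) guarantees that some scheduled component is unfinished, so the total
number of remaining transitions strictly decreases; when every component is final, the
runs are over because final states are fixed, and clause (2) gives `post`.
-/

/-- `Reach T F v v'`: there is a finite execution of the program `(T, F)`
from `v` ending in the final state `v'`. -/
def Reach {σ : Type*} (T : σ → σ → Prop) (F : σ → Prop) (v v' : σ) : Prop :=
  ∃ (n : ℕ) (u : ℕ → σ), u 0 = v ∧ (∀ j < n, T (u j) (u (j + 1))) ∧ u n = v' ∧ F v'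

section Run

variable {σ : Type*} {T : σ → σ → Prop} {F : σ → Prop}

/-- `Reach T F v v'` unfolds to `∃ n, ReachIn T F n v v'`. -/
def ReachIn (T : σ → σ → Prop) (F : σ → Prop) (n : ℕ) (v v' : σ) : Prop :=
  ∃ u : ℕ → σ, u 0 = v ∧ (∀ j < n, T (u j) (u (j + 1))) ∧ u n = v' ∧ F v'

theorem reachIn_zero_iff {v v' : σ} : ReachIn T F 0 v v' ↔ v = v' ∧ F v' :=
  ⟨fun ⟨_, h0, _, hn, hF⟩ => ⟨h0 ▸ hn, hF⟩,
    fun ⟨h, hF⟩ => ⟨fun _ => v, rfl, fun _ hj => absurd hj (Nat.not_lt_zero _), h, hF⟩⟩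

theorem reachIn_succ_iff {n : ℕ} {v v' : σ} :
    ReachIn T F (n + 1) v v' ↔ ∃ w, T v w ∧ ReachIn T F n w v' := by
  constructor
  · rintro ⟨u, rfl, hs, hn, hF⟩
    exact ⟨u 1, hs 0 n.succ_pos, fun j => u (j + 1), rfl,
      fun j hj => hs (j + 1) (by omega), hn, hF⟩
  · rintro ⟨w, hT, u, rfl, hs, hn, hF⟩
    refine ⟨fun | 0 => v | j + 1 => u j, rfl, ?_, hn, hF⟩
    rintro (_ | j) hj
    exacts [hT, hs j (by omega)]

theorem Reach.of_final {v : σ} (hv : F v) : Reach T F v v :=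
  ⟨0, reachIn_zero_iff.2 ⟨rfl, hv⟩⟩

theorem Reach.cons {v w v' : σ} (hT : T v w) (h : Reach T F w v') : Reach T F v v' :=
  let ⟨n, hn⟩ := h
  ⟨n + 1, reachIn_succ_iff.2 ⟨w, hT, hn⟩⟩

theorem ReachIn.eq_of_final (hfix : ∀ v v', F v → T v v' → v' = v) :
    ∀ {n : ℕ} {v v' : σ}, ReachIn T F n v v' → F v → v' = v
  | 0, _, _, h, _ => (reachIn_zero_iff.1 h).1.symm
  | _ + 1, _, _, h, hv => by
    obtain ⟨w, hT, hw⟩ := reachIn_succ_iff.1 h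
    obtain rfl := hfix _ _ hv hT
    exact hw.eq_of_final hfix hv

theorem ReachIn.exists_step (hloop : ∀ v, F v → T v v) {n : ℕ} {v v' : σ}
    (h : ReachIn T F n v v') :
    ∃ w m, T v w ∧ ReachIn T F m w v' ∧ m ≤ n ∧ (¬ F v → m < n) := by
  cases n with
  | zero =>
    obtain ⟨rfl, hF⟩ := reachIn_zero_iff.1 h
    exact ⟨v, 0, hloop v hF, h, le_rfl, fun hnF => absurd hF hnF⟩
  | succ n =>
    obtain ⟨w, hT, hw⟩ := reachIn_succ_iff.1 h
    exact ⟨w, n, hT, hw, n.le_succ, fun _ => n.lt_succ_self⟩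

end Run

section Product

variable {ι : Type*} {σ : ι → Type*} (T : ∀ i, σ i → σ i → Prop) (F : ∀ i, σ i → Prop)

def KSafe (pre post : (∀ i, σ i) → Prop) : Prop :=
  ∀ v v' : ∀ i, σ i, pre v → (∀ i, Reach (T i) (F i) (v i) (v' i)) → post v'

/-- Clauses (1)–(5) of `C_S`, with `sch A` for `sch_A`. -/
structure IsSemanticSolution (pre post inv : (∀ i, σ i) → Prop)
    (sch : Set ι → (∀ i, σ i) → Prop) : Prop where
  inv_of_pre : ∀ x, pre x → inv x
  post_of_final : ∀ x, inv x → (∀ i, F i (x i)) → post x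
  inv_step : ∀ A : Set ι, A.Nonempty → ∀ x x' : ∀ i, σ i,
    inv x → sch A x → (∀ i ∈ A, T i (x i) (x' i)) → (∀ i ∉ A, x' i = x i) → inv x'
  exists_unfinished_mem : ∀ A : Set ι, A.Nonempty → ∀ x : ∀ i, σ i,
    inv x → sch A x → (∃ i, ¬ F i (x i)) → ∃ i ∈ A, ¬ F i (x i)
  exists_sch : ∀ x : ∀ i, σ i, inv x → (∃ i, ¬ F i (x i)) → ∃ A : Set ι, A.Nonempty ∧ sch A x

def weakestPre (post : (∀ i, σ i) → Prop) (x : ∀ i, σ i) : Prop :=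
  ∀ x', (∀ i, Reach (T i) (F i) (x i) (x' i)) → post x'

variable {T F}

theorem isSemanticSolution_weakestPre {pre post : (∀ i, σ i) → Prop} (h : KSafe T F pre post) :
    IsSemanticSolution T F pre post (weakestPre T F post) (fun A _ => A = Set.univ) where
  inv_of_pre x hx x' hr := h x x' hx hr
  post_of_final x hx hF := hx x fun i => .of_final (hF i)
  inv_step _ _ _ _ hx hA hT _ y hy := hx y fun i => (hy i).cons (hT i (hA ▸ trivial))
  exists_unfinished_mem _ _ _ _ hA := fun ⟨i, hi⟩ => ⟨i, hA ▸ trivial, hi⟩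
  exists_sch _ _ := fun ⟨i, _⟩ => ⟨Set.univ, ⟨i, trivial⟩, rfl⟩

theorem exists_step_of_reachIn
    (hloop : ∀ i v, F i v → T i v v) (A : Set ι) {n : ι → ℕ} {x x' : ∀ i, σ i}
    (hrun : ∀ i, ReachIn (T i) (F i) (n i) (x i) (x' i)) :
    ∃ (y : ∀ i, σ i) (m : ι → ℕ), (∀ i ∈ A, T i (x i) (y i)) ∧ (∀ i ∉ A, y i = x i) ∧
      (∀ i, ReachIn (T i) (F i) (m i) (y i) (x' i)) ∧ (∀ i, m i ≤ n i) ∧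
      (∀ i ∈ A, ¬ F i (x i) → m i < n i) := by
  have : ∀ i, ∃ (w : σ i) (m : ℕ), (i ∈ A → T i (x i) w ∧ (¬ F i (x i) → m < n i)) ∧
      (i ∉ A → w = x i) ∧ ReachIn (T i) (F i) m w (x' i) ∧ m ≤ n i := by
    intro i
    by_cases hi : i ∈ A
    · obtain ⟨w, m, hT, hw, hle, hlt⟩ := (hrun i).exists_step (hloop i)
      exact ⟨w, m, fun _ => ⟨hT, hlt⟩, fun h => absurd hi h, hw, hle⟩
    · exact ⟨x i, n i, fun h => absurd h hi, fun _ => rfl, hrun i, le_rfl⟩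
  choose y m hA hnA hrun' hle using this
  exact ⟨y, m, fun i hi => (hA i hi).1, hnA, hrun', hle, fun i hi => (hA i hi).2⟩

end Product

section Soundness

variable {ι : Type*} [Fintype ι] {σ : ι → Type*} {T : ∀ i, σ i → σ i → Prop}
  {F : ∀ i, σ i → Prop} {pre post inv : (∀ i, σ i) → Prop} {sch : Set ι → (∀ i, σ i) → Prop}

theorem IsSemanticSolution.post_of_reachIn (hS : IsSemanticSolution T F pre post inv sch)
    (hfix : ∀ i v v', F i v → T i v v' → v' = v) (hloop : ∀ i v, F i v → T i v v)
    (n : ι → ℕ) {x x' : ∀ i, σ i} (hx : inv x)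
    (hrun : ∀ i, ReachIn (T i) (F i) (n i) (x i) (x' i)) : post x' := by
  by_cases hfin : ∀ i, F i (x i)
  · have hx' : x' = x := funext fun i => (hrun i).eq_of_final (hfix i) (hfin i)
    exact hx' ▸ hS.post_of_final x hx hfin
  · replace hfin := not_forall.1 hfin
    obtain ⟨A, hA, hsch⟩ := hS.exists_sch x hx hfin
    obtain ⟨i₀, hi₀, hi₀F⟩ := hS.exists_unfinished_mem A hA x hx hsch hfin
    obtain ⟨y, m, hT, hy, hrun', hle, hlt⟩ := exists_step_of_reachIn hloop A hrun
    have : ∑ i, m i < ∑ i, n i :=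
      Finset.sum_lt_sum (fun i _ => hle i) ⟨i₀, Finset.mem_univ _, hlt i₀ hi₀ hi₀F⟩
    exact hS.post_of_reachIn hfix hloop m (hS.inv_step A hA x y hx hsch hT hy) hrun'
termination_by ∑ i, n i

theorem IsSemanticSolution.kSafe (hS : IsSemanticSolution T F pre post inv sch)
    (hfix : ∀ i v v', F i v → T i v v' → v' = v) (hloop : ∀ i v, F i v → T i v v) :
    KSafe T F pre post := fun v _ hpre hrun =>
  let ⟨n, hn⟩ := Classical.axiomOfChoice fun i => hrun i
  hS.post_of_reachIn hfix hloop n (hS.inv_of_pre v hpre) hn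

end Soundness

theorem ksafety_encoding_sound_and_complete_general
    {k : ℕ} {σ : Fin k → Type*}
    (T : ∀ i, σ i → σ i → Prop) (F : ∀ i, σ i → Prop)
    (hFinFix : ∀ i v v', F i v → T i v v' → v' = v)
    (hFinLoop : ∀ i v, F i v → T i v v)
    (pre post : (∀ i, σ i) → Prop) :
    (∀ v v' : ∀ i, σ i, pre v → (∀ i, Reach (T i) (F i) (v i) (v' i)) → post v')
    ↔
    ∃ (inv : (∀ i, σ i) → Prop) (sch : Set (Fin k) → (∀ i, σ i) → Prop),
      -- (1)
      (∀ x, pre x → inv x) ∧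
      -- (2)
      (∀ x, inv x → (∀ i, F i (x i)) → post x) ∧
      -- (3)
      (∀ A : Set (Fin k), A.Nonempty → ∀ x x' : ∀ i, σ i,
        inv x → sch A x → (∀ i ∈ A, T i (x i) (x' i)) → (∀ i ∉ A, x' i = x i) →
        inv x') ∧
      -- (4)
      (∀ A : Set (Fin k), A.Nonempty → ∀ x : ∀ i, σ i,
        inv x → sch A x → (∃ i, ¬ F i (x i)) → ∃ i ∈ A, ¬ F i (x i)) ∧
      -- (5)
      (∀ x : ∀ i, σ i, inv x → (∃ i, ¬ F i (x i)) →
        ∃ A : Set (Fin k), A.Nonempty ∧ sch A x) := by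
  constructor
  · intro hsafe
    obtain ⟨h1, h2, h3, h4, h5⟩ := isSemanticSolution_weakestPre hsafe
    exact ⟨_, _, h1, h2, h3, h4, h5⟩
  · rintro ⟨inv, sch, h1, h2, h3, h4, h5⟩
    exact IsSemanticSolution.kSafe ⟨h1, h2, h3, h4, h5⟩ hFinFix hFinLoop

/-- Theorem 1 (Soundness and Completeness of the k-safety encoding C_S). -/
theorem ksafety_encoding_sound_and_complete
    {k : ℕ} (hk : 1 ≤ k) {σ : Fin k → Type*}
    (T : ∀ i, σ i → σ i → Prop) (F : ∀ i, σ i → Prop)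
    (hFinFix : ∀ i v v', F i v → T i v v' → v' = v)
    (hFinLoop : ∀ i v, F i v → T i v v)
    (pre post : (∀ i, σ i) → Prop) :
    (∀ v v' : ∀ i, σ i, pre v → (∀ i, Reach (T i) (F i) (v i) (v' i)) → post v')
    ↔
    ∃ (inv : (∀ i, σ i) → Prop) (sch : Set (Fin k) → (∀ i, σ i) → Prop),
      -- (1)
      (∀ x, pre x → inv x) ∧
      -- (2)
      (∀ x, inv x → (∀ i, F i (x i)) → post x) ∧
      -- (3)
      (∀ A : Set (Fin k), A.Nonempty → ∀ x x' : ∀ i, σ i,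
        inv x → sch A x → (∀ i ∈ A, T i (x i) (x' i)) → (∀ i ∉ A, x' i = x i) →
        inv x') ∧
      -- (4)
      (∀ A : Set (Fin k), A.Nonempty → ∀ x : ∀ i, σ i,
        inv x → sch A x → (∃ i, ¬ F i (x i)) → ∃ i ∈ A, ¬ F i (x i)) ∧
      -- (5)
      (∀ x : ∀ i, σ i, inv x → (∃ i, ¬ F i (x i)) →
        ∃ A : Set (Fin k), A.Nonempty ∧ sch A x) :=
  ksafety_encoding_sound_and_complete_general T F hFinFix hFinLoop pre post
end

section
/- Soundness and Completeness of the co-termination encoding C_CoT (Theorem 2): Let P_1 = (T_1, F_1) and P_2 = (T_2, F_2) be programs on σ_1 and σ_2 and pre a predicate on σ_1 × σ_2. Then P_1, P_2 satisfy co-termination with respect to pre if and only if the constraint set C_CoT has a semantic solution, i.e., there exist predicates inv, sch_TT, sch_FT, sch_TF on ℤ × ℤ × σ_1 × σ_2, a function fnbnd : σ_1 × σ_2 → ℤ, and a well-founded relation wfr on σ_2 satisfying clauses (1)–(6) of C_CoT. -/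
/-- `Diverge T F v`: there is an infinite non-final execution of `(T, F)` from `v`. -/
def Diverge {σ : Type*} (T : σ → σ → Prop) (F : σ → Prop) (v : σ) : Prop :=
  ∃ u : ℕ → σ, u 0 = v ∧ (∀ j, T (u j) (u (j + 1))) ∧ (∀ j, ¬ F (u j))

/-- A relation is well-founded in the paper's sense: no infinite chain. -/
def NoInfChain {τ : Type*} (W : τ → τ → Prop) : Prop :=
  ¬ ∃ v : ℕ → τ, ∀ j, W (v j) (v (j + 1))

/-!
Soundness: run the two programs in lockstep as the schedulers dictate, keeping `d` equal to the
number of steps of `P₁` minus the number of steps of `P₂`. While `P₁` is not final, clause (2)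
confines `d` to `[-b, b]`, and `P₁` has only finitely many steps left before it is final, so the
product run brings `P₁` to a final state; from then on only `P₂` moves and clause (6) turns its
divergent run into an infinite `wfr`-chain.

Completeness: the invariant is "the current pair co-terminates"; both programs move while `P₂`
is not final and only `P₁` moves afterwards, and `wfr` is the transition relation of `P₂`
restricted to non-final states without a divergent run.
-/

section Runs

variable {σ : Type*} {T : σ → σ → Prop} {F : σ → Prop}

lemma Reach.refl {v : σ} (hF : F v) : Reach T F v v :=
  ⟨0, fun _ => v, rfl, fun _ hj => absurd hj (Nat.not_lt_zero _), rfl, hF⟩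

lemma Reach.prepend {x x' v : σ} (hT : T x x') (h : Reach T F x' v) : Reach T F x v := by
  obtain ⟨n, u, rfl, hu, hn, hF⟩ := h
  refine ⟨n + 1, fun | 0 => x | m + 1 => u m, rfl, ?_, hn, hF⟩
  rintro (_ | m) hm
  · exact hT
  · exact hu m (by omega)

lemma Diverge.prepend {x x' : σ} (hT : T x x') (hF : ¬ F x) (h : Diverge T F x') :
    Diverge T F x := by
  obtain ⟨u, rfl, hu, huF⟩ := h
  refine ⟨fun | 0 => x | m + 1 => u m, rfl, ?_, ?_⟩
  · rintro (_ | m)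
    · exact hT
    · exact hu m
  · rintro (_ | m)
    · exact hF
    · exact huF m

/-- Cut the run at its first final state and self-loop there. -/
lemma Reach.exists_run_final_iff (hLoop : ∀ v, F v → T v v) {v v' : σ} (h : Reach T F v v') :
    ∃ (n : ℕ) (u : ℕ → σ), u 0 = v ∧ (∀ j, T (u j) (u (j + 1))) ∧ ∀ j, F (u j) ↔ n ≤ j := by
  classical
  obtain ⟨N, u, rfl, hu, rfl, hF⟩ := h
  have hex : ∃ n, F (u n) := ⟨N, hF⟩
  obtain ⟨n, hn, hmin⟩ : ∃ n, F (u n) ∧ ∀ m < n, ¬ F (u m) :=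
    ⟨Nat.find hex, Nat.find_spec hex, fun _ => Nat.find_min hex⟩
  have hle : n ≤ N := by_contra fun h => hmin N (by omega) hF
  refine ⟨n, fun j => u (min j n), by simp, fun j => ?_, fun j => ?_⟩ <;> dsimp only
  · rcases lt_or_ge j n with hj | hj
    · rw [min_eq_left hj.le, min_eq_left hj]
      exact hu j (by omega)
    · rw [min_eq_right hj, min_eq_right (by omega)]
      exact hLoop _ hn
  · refine ⟨fun hFj => ?_, fun hj => by rwa [min_eq_right hj]⟩
    by_contra! hj
    exact hmin j hj (by rwa [min_eq_left hj.le] at hFj)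

lemma noInfChain_of_not_diverge :
    NoInfChain fun x x' => T x x' ∧ ¬ F x ∧ ¬ Diverge T F x := by
  rintro ⟨v, hv⟩
  exact (hv 0).2.2 ⟨v, rfl, fun j => (hv j).1, fun j => (hv j).2.1⟩

end Runs

section CoTermination

variable {σ₁ σ₂ : Type*} (T₁ : σ₁ → σ₁ → Prop) (F₁ : σ₁ → Prop)
  (T₂ : σ₂ → σ₂ → Prop) (F₂ : σ₂ → Prop)

def CoTerminates (x₁ : σ₁) (x₂ : σ₂) : Prop :=
  ∀ v₁', Reach T₁ F₁ x₁ v₁' → ¬ Diverge T₂ F₂ x₂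

/-- A semantic solution of the constraint set `C_CoT`; the fields are its clauses (1)–(6). -/
structure CoTermSolution (pre : σ₁ → σ₂ → Prop) where
  inv : ℤ → ℤ → σ₁ → σ₂ → Prop
  schTT : ℤ → ℤ → σ₁ → σ₂ → Prop
  schFT : ℤ → ℤ → σ₁ → σ₂ → Prop
  schTF : ℤ → ℤ → σ₁ → σ₂ → Prop
  fnbnd : σ₁ → σ₂ → ℤ
  wfr : σ₂ → σ₂ → Prop
  noInfChain_wfr : NoInfChain wfr
  init : ∀ x₁ x₂, pre x₁ x₂ → inv 0 (fnbnd x₁ x₂) x₁ x₂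
  bounded : ∀ d b x₁ x₂, inv d b x₁ x₂ → ¬ F₁ x₁ → ¬ F₂ x₂ → (-b ≤ d ∧ d ≤ b ∧ b ≥ 0)
  step_FT : ∀ d d' b x₁ x₂ x₂', inv d b x₁ x₂ → schFT d b x₁ x₂ → T₂ x₂ x₂' →
    (F₁ x₁ ∨ F₂ x₂ ∨ d' = d - 1) → inv d' b x₁ x₂'
  step_TF : ∀ d d' b x₁ x₁' x₂, inv d b x₁ x₂ → schTF d b x₁ x₂ → T₁ x₁ x₁' →
    (F₁ x₁ ∨ F₂ x₂ ∨ d' = d + 1) → inv d' b x₁' x₂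
  step_TT : ∀ d b x₁ x₁' x₂ x₂', inv d b x₁ x₂ → schTT d b x₁ x₂ → T₁ x₁ x₁' →
    T₂ x₂ x₂' → inv d b x₁' x₂'
  fair_FT : ∀ d b x₁ x₂, inv d b x₁ x₂ → schFT d b x₁ x₂ → ¬ F₁ x₁ → ¬ F₂ x₂
  fair_TF : ∀ d b x₁ x₂, inv d b x₁ x₂ → schTF d b x₁ x₂ → ¬ F₂ x₂ → ¬ F₁ x₁
  sched_total : ∀ d b x₁ x₂, inv d b x₁ x₂ → (¬ F₁ x₁ ∨ ¬ F₂ x₂) →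
    schTT d b x₁ x₂ ∨ schFT d b x₁ x₂ ∨ schTF d b x₁ x₂
  wfr_of_final : ∀ d b x₁ x₂ x₂', inv d b x₁ x₂ → F₁ x₁ → ¬ F₂ x₂ → T₂ x₂ x₂' → wfr x₂ x₂'

variable {T₁ F₁ T₂ F₂}

namespace CoTerminates

lemma step_left {x₁ x₁' : σ₁} {x₂ : σ₂} (h : CoTerminates T₁ F₁ T₂ F₂ x₁ x₂)
    (hT₁ : T₁ x₁ x₁') : CoTerminates T₁ F₁ T₂ F₂ x₁' x₂ :=
  fun v₁' hr => h v₁' (hr.prepend hT₁)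

lemma step_both {x₁ x₁' : σ₁} {x₂ x₂' : σ₂} (h : CoTerminates T₁ F₁ T₂ F₂ x₁ x₂)
    (hT₁ : T₁ x₁ x₁') (hT₂ : T₂ x₂ x₂') (hF₂ : ¬ F₂ x₂) :
    CoTerminates T₁ F₁ T₂ F₂ x₁' x₂' :=
  fun v₁' hr hd => h v₁' (hr.prepend hT₁) (hd.prepend hT₂ hF₂)

lemma not_diverge_of_final {x₁ : σ₁} {x₂ : σ₂} (h : CoTerminates T₁ F₁ T₂ F₂ x₁ x₂)
    (hF₁ : F₁ x₁) : ¬ Diverge T₂ F₂ x₂ :=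
  h x₁ (Reach.refl hF₁)

end CoTerminates

namespace CoTermSolution

variable {pre : σ₁ → σ₂ → Prop}

/-- The invariant is only constrained while `P₂` runs, since a step of `P₁` after `P₂` has
finished may change `d` arbitrarily (clause (3b)). -/
def ofCoTerminates (h : ∀ x₁ x₂, pre x₁ x₂ → CoTerminates T₁ F₁ T₂ F₂ x₁ x₂) :
    CoTermSolution T₁ F₁ T₂ F₂ pre where
  inv d b x₁ x₂ := CoTerminates T₁ F₁ T₂ F₂ x₁ x₂ ∧ (¬ F₂ x₂ → d = 0 ∧ b = 0)
  schTT _ _ _ x₂ := ¬ F₂ x₂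
  schFT _ _ _ _ := False
  schTF _ _ _ x₂ := F₂ x₂
  fnbnd _ _ := 0
  wfr x₂ x₂' := T₂ x₂ x₂' ∧ ¬ F₂ x₂ ∧ ¬ Diverge T₂ F₂ x₂
  noInfChain_wfr := noInfChain_of_not_diverge
  init x₁ x₂ hpre := ⟨h x₁ x₂ hpre, fun _ => ⟨rfl, rfl⟩⟩
  bounded := by
    rintro d b x₁ x₂ ⟨-, hdb⟩ - hF₂
    obtain ⟨rfl, rfl⟩ := hdb hF₂
    omega
  step_FT _ _ _ _ _ _ _ := False.elim
  step_TF _ _ _ _ _ _ h hF₂ hT₁ _ := ⟨h.1.step_left hT₁, fun hnF₂ => absurd hF₂ hnF₂⟩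
  step_TT _ _ _ _ _ _ h hF₂ hT₁ hT₂ := ⟨h.1.step_both hT₁ hT₂ hF₂, fun _ => h.2 hF₂⟩
  fair_FT _ _ _ _ _ := False.elim
  fair_TF _ _ _ _ _ hF₂ hnF₂ := absurd hF₂ hnF₂
  sched_total _ _ _ x₂ _ _ := (em' (F₂ x₂)).imp_right Or.inr
  wfr_of_final _ _ _ _ _ h hF₁ hF₂ hT₂ := ⟨hT₂, hF₂, h.1.not_diverge_of_final hF₁⟩

section ProductRun

variable (s : CoTermSolution T₁ F₁ T₂ F₂ pre) {u : ℕ → σ₁} {w : ℕ → σ₂} {b : ℤ} {n : ℕ}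

/-- The product run has made `i` steps of `P₁` and `k` steps of `P₂`; `d` is `i - k`. -/
def InvAt (u : ℕ → σ₁) (w : ℕ → σ₂) (b : ℤ) (i k : ℕ) : Prop :=
  s.inv ((i : ℤ) - k) b (u i) (w k)

lemma InvAt.exists_next (hu : ∀ j, T₁ (u j) (u (j + 1))) (hw : ∀ j, T₂ (w j) (w (j + 1)))
    (hwF : ∀ j, ¬ F₂ (w j)) {i k : ℕ} (h : s.InvAt u w b i k) :
    ∃ i' k', s.InvAt u w b i' k' ∧ i ≤ i' ∧ i + k < i' + k' ∧ (F₁ (u i) → k' = k + 1) := by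
  rcases s.sched_total _ _ _ _ h (Or.inr (hwF k)) with hTT | hFT | hTF
  · have hd : ((i + 1 : ℕ) : ℤ) - (k + 1 : ℕ) = i - k := by push_cast; ring
    refine ⟨i + 1, k + 1, ?_, by omega, by omega, fun _ => rfl⟩
    rw [InvAt, hd]
    exact s.step_TT _ _ _ _ _ _ h hTT (hu i) (hw k)
  · exact ⟨i, k + 1, s.step_FT _ _ _ _ _ _ h hFT (hw k) (Or.inr (Or.inr (by push_cast; ring))),
      le_rfl, by omega, fun _ => rfl⟩
  · exact ⟨i + 1, k, s.step_TF _ _ _ _ _ _ h hTF (hu i) (Or.inr (Or.inr (by push_cast; ring))),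
      by omega, by omega, fun hF => absurd hF (s.fair_TF _ _ _ _ h hTF (hwF k))⟩

lemma exists_invAt_final (hu : ∀ j, T₁ (u j) (u (j + 1))) (hw : ∀ j, T₂ (w j) (w (j + 1)))
    (hwF : ∀ j, ¬ F₂ (w j)) (hFu : ∀ j, F₁ (u j) ↔ n ≤ j) (h₀ : s.InvAt u w b 0 0) :
    ∃ i k, s.InvAt u w b i k ∧ n ≤ i := by
  have hreach : ∀ m, ∃ i k, s.InvAt u w b i k ∧ (n ≤ i ∨ m ≤ i + k) := by
    intro m
    induction m with
    | zero => exact ⟨0, 0, h₀, Or.inr le_rfl⟩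
    | succ m ih =>
      obtain ⟨i, k, h, hn | hm⟩ := ih
      · exact ⟨i, k, h, Or.inl hn⟩
      · obtain ⟨i', k', h', -, hlt, -⟩ := h.exists_next s hu hw hwF
        exact ⟨i', k', h', Or.inr (by omega)⟩
  obtain ⟨i, k, h, hn | hm⟩ := hreach (2 * n + b.toNat + 1)
  · exact ⟨i, k, h, hn⟩
  · refine ⟨i, k, h, ?_⟩
    by_contra! hi
    have := s.bounded _ _ _ _ h (by rw [hFu]; omega) (hwF k)
    omega

lemma not_invAt_of_le (hu : ∀ j, T₁ (u j) (u (j + 1))) (hw : ∀ j, T₂ (w j) (w (j + 1)))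
    (hwF : ∀ j, ¬ F₂ (w j)) (hFu : ∀ j, F₁ (u j) ↔ n ≤ j) {i k : ℕ} (hi : n ≤ i) :
    ¬ s.InvAt u w b i k := by
  intro h
  have hchain : ∀ t, ∃ i, n ≤ i ∧ s.InvAt u w b i (k + t) := by
    intro t
    induction t with
    | zero => exact ⟨i, hi, h⟩
    | succ t ih =>
      obtain ⟨i, hi, h⟩ := ih
      obtain ⟨i', k', h', hle, -, hk'⟩ := h.exists_next s hu hw hwF
      exact ⟨i', by omega, by rwa [hk' ((hFu i).2 hi)] at h'⟩
  refine s.noInfChain_wfr ⟨fun t => w (k + t), fun t => ?_⟩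
  obtain ⟨i, hi, h⟩ := hchain t
  exact s.wfr_of_final _ _ _ _ _ h ((hFu i).2 hi) (hwF _) (hw _)

end ProductRun

theorem coTerminates (s : CoTermSolution T₁ F₁ T₂ F₂ pre) (hLoop₁ : ∀ v, F₁ v → T₁ v v)
    {v₁ : σ₁} {v₂ : σ₂} (hpre : pre v₁ v₂) : CoTerminates T₁ F₁ T₂ F₂ v₁ v₂ := by
  rintro v₁' hr ⟨w, rfl, hw, hwF⟩
  obtain ⟨n, u, rfl, hu, hFu⟩ := hr.exists_run_final_iff hLoop₁
  have h₀ : s.InvAt u w (s.fnbnd (u 0) (w 0)) 0 0 := by simpa [InvAt] using s.init _ _ hpre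
  obtain ⟨i, k, h, hi⟩ := s.exists_invAt_final hu hw hwF hFu h₀
  exact s.not_invAt_of_le hu hw hwF hFu hi h

end CoTermSolution

end CoTermination

theorem coterm_encoding_sound_and_complete_general
    {σ₁ σ₂ : Type*}
    (T₁ : σ₁ → σ₁ → Prop) (F₁ : σ₁ → Prop)
    (T₂ : σ₂ → σ₂ → Prop) (F₂ : σ₂ → Prop)
    (hFinLoop₁ : ∀ v, F₁ v → T₁ v v)
    (pre : σ₁ → σ₂ → Prop) :
    (∀ v₁ v₂ v₁', pre v₁ v₂ → Reach T₁ F₁ v₁ v₁' → ¬ Diverge T₂ F₂ v₂)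
    ↔
    ∃ (inv schTT schFT schTF : ℤ → ℤ → σ₁ → σ₂ → Prop)
      (fnbnd : σ₁ → σ₂ → ℤ) (wfr : σ₂ → σ₂ → Prop),
      NoInfChain wfr ∧
      -- (1)
      (∀ x₁ x₂, pre x₁ x₂ → inv 0 (fnbnd x₁ x₂) x₁ x₂) ∧
      -- (2)
      (∀ d b x₁ x₂, inv d b x₁ x₂ → ¬ F₁ x₁ → ¬ F₂ x₂ →
        (-b ≤ d ∧ d ≤ b ∧ b ≥ 0)) ∧
      -- (3a)
      (∀ d d' b x₁ x₂ x₂', inv d b x₁ x₂ → schFT d b x₁ x₂ → T₂ x₂ x₂' →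
        (F₁ x₁ ∨ F₂ x₂ ∨ d' = d - 1) → inv d' b x₁ x₂') ∧
      -- (3b)
      (∀ d d' b x₁ x₁' x₂, inv d b x₁ x₂ → schTF d b x₁ x₂ → T₁ x₁ x₁' →
        (F₁ x₁ ∨ F₂ x₂ ∨ d' = d + 1) → inv d' b x₁' x₂) ∧
      -- (3c)
      (∀ d b x₁ x₁' x₂ x₂', inv d b x₁ x₂ → schTT d b x₁ x₂ → T₁ x₁ x₁' →
        T₂ x₂ x₂' → inv d b x₁' x₂') ∧
      -- (4a)
      (∀ d b x₁ x₂, inv d b x₁ x₂ → schFT d b x₁ x₂ → ¬ F₁ x₁ → ¬ F₂ x₂) ∧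
      -- (4b)
      (∀ d b x₁ x₂, inv d b x₁ x₂ → schTF d b x₁ x₂ → ¬ F₂ x₂ → ¬ F₁ x₁) ∧
      -- (5)
      (∀ d b x₁ x₂, inv d b x₁ x₂ → (¬ F₁ x₁ ∨ ¬ F₂ x₂) →
        schTT d b x₁ x₂ ∨ schFT d b x₁ x₂ ∨ schTF d b x₁ x₂) ∧
      -- (6)
      (∀ d b x₁ x₂ x₂', inv d b x₁ x₂ → F₁ x₁ → ¬ F₂ x₂ → T₂ x₂ x₂' →
        wfr x₂ x₂') := by
  refine ⟨fun h => ?_, ?_⟩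
  · obtain ⟨inv, schTT, schFT, schTF, fnbnd, wfr, h₀, h₁, h₂, h₃a, h₃b, h₃c, h₄a, h₄b, h₅, h₆⟩ :=
      CoTermSolution.ofCoTerminates (pre := pre) fun v₁ v₂ hpre v₁' => h v₁ v₂ v₁' hpre
    exact ⟨inv, schTT, schFT, schTF, fnbnd, wfr, h₀, h₁, h₂, h₃a, h₃b, h₃c, h₄a, h₄b, h₅, h₆⟩
  · rintro ⟨inv, schTT, schFT, schTF, fnbnd, wfr, h₀, h₁, h₂, h₃a, h₃b, h₃c, h₄a, h₄b, h₅, h₆⟩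
      v₁ v₂ v₁' hpre
    exact CoTermSolution.coTerminates
      ⟨inv, schTT, schFT, schTF, fnbnd, wfr, h₀, h₁, h₂, h₃a, h₃b, h₃c, h₄a, h₄b, h₅, h₆⟩
      hFinLoop₁ hpre v₁'

/-- Theorem 2 (Soundness and Completeness of the co-termination encoding C_CoT). -/
theorem coterm_encoding_sound_and_complete
    {σ₁ σ₂ : Type*}
    (T₁ : σ₁ → σ₁ → Prop) (F₁ : σ₁ → Prop)
    (T₂ : σ₂ → σ₂ → Prop) (F₂ : σ₂ → Prop)
    (hFinFix₁ : ∀ v v', F₁ v → T₁ v v' → v' = v) (hFinLoop₁ : ∀ v, F₁ v → T₁ v v)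
    (hFinFix₂ : ∀ v v', F₂ v → T₂ v v' → v' = v) (hFinLoop₂ : ∀ v, F₂ v → T₂ v v)
    (pre : σ₁ → σ₂ → Prop) :
    (∀ v₁ v₂ v₁', pre v₁ v₂ → Reach T₁ F₁ v₁ v₁' → ¬ Diverge T₂ F₂ v₂)
    ↔
    ∃ (inv schTT schFT schTF : ℤ → ℤ → σ₁ → σ₂ → Prop)
      (fnbnd : σ₁ → σ₂ → ℤ) (wfr : σ₂ → σ₂ → Prop),
      NoInfChain wfr ∧
      -- (1)
      (∀ x₁ x₂, pre x₁ x₂ → inv 0 (fnbnd x₁ x₂) x₁ x₂) ∧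
      -- (2)
      (∀ d b x₁ x₂, inv d b x₁ x₂ → ¬ F₁ x₁ → ¬ F₂ x₂ →
        (-b ≤ d ∧ d ≤ b ∧ b ≥ 0)) ∧
      -- (3a)
      (∀ d d' b x₁ x₂ x₂', inv d b x₁ x₂ → schFT d b x₁ x₂ → T₂ x₂ x₂' →
        (F₁ x₁ ∨ F₂ x₂ ∨ d' = d - 1) → inv d' b x₁ x₂') ∧
      -- (3b)
      (∀ d d' b x₁ x₁' x₂, inv d b x₁ x₂ → schTF d b x₁ x₂ → T₁ x₁ x₁' →
        (F₁ x₁ ∨ F₂ x₂ ∨ d' = d + 1) → inv d' b x₁' x₂) ∧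
      -- (3c)
      (∀ d b x₁ x₁' x₂ x₂', inv d b x₁ x₂ → schTT d b x₁ x₂ → T₁ x₁ x₁' →
        T₂ x₂ x₂' → inv d b x₁' x₂') ∧
      -- (4a)
      (∀ d b x₁ x₂, inv d b x₁ x₂ → schFT d b x₁ x₂ → ¬ F₁ x₁ → ¬ F₂ x₂) ∧
      -- (4b)
      (∀ d b x₁ x₂, inv d b x₁ x₂ → schTF d b x₁ x₂ → ¬ F₂ x₂ → ¬ F₁ x₁) ∧
      -- (5)
      (∀ d b x₁ x₂, inv d b x₁ x₂ → (¬ F₁ x₁ ∨ ¬ F₂ x₂) →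
        schTT d b x₁ x₂ ∨ schFT d b x₁ x₂ ∨ schTF d b x₁ x₂) ∧
      -- (6)
      (∀ d b x₁ x₂ x₂', inv d b x₁ x₂ → F₁ x₁ → ¬ F₂ x₂ → T₂ x₂ x₂' →
        wfr x₂ x₂') :=
  coterm_encoding_sound_and_complete_general T₁ F₁ T₂ F₂ hFinLoop₁ pre
end

section
/- Abstract form of the relative completeness of stratified CEGIS (Theorem 5): Let Cand and Ex be types, Sat : Cand → Prop, sat : Cand → Ex → Prop, and space : ℕ → Set Cand such that every space(m) is a finite set and space(m) ⊆ space(m') whenever m ≤ m'. Suppose there exist N and σ* ∈ space(N) with Sat(σ*). Then there do NOT exist sequences σ : ℕ → Cand, E : ℕ → Set Ex, and s : ℕ → ℕ such that for every n: (i) σ(n) ∈ space(s(n)); (ii) sat(σ(n), e) for every e ∈ E(n); (iii) ¬Sat(σ(n)); (iv) there exists e ∈ E(n+1) with ¬sat(σ(n), e); (v) E(n) ⊆ E(n+1) and sat(σ*, e) for every e ∈ E(n); (vi) s(n) ≤ s(n+1), and if s(n+1) ≠ s(n) then there is no c ∈ space(s(n)) with sat(c, e) for all e ∈ E(n+1).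 In other words, the stratified CEGIS loop cannot run forever and must return a genuine solution whenever some stratum of the template family contains one. -/
/-!
Each counterexample refutes the current candidate, and since example sets only grow, every later
candidate satisfies it too; hence no candidate is ever proposed twice. Once the stratum index
reaches `N`, the stratum contains `σ*`, which is consistent with every example, so the index never
increases again. All candidates therefore lie in one finite stratum, which cannot hold infinitely
many distinct candidates.
-/

theorem eq_of_stalls_of_le {α : Type*} {p : α → Prop} {s : ℕ → α}
    (hstall : ∀ n, p (s n) → s (n + 1) = s n) {n₀ : ℕ} (hp : p (s n₀)) {n : ℕ} (hn : n₀ ≤ n) :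
    s n = s n₀ := by
  induction n, hn using Nat.le_induction with
  | base => rfl
  | succ n _ ih => rw [hstall n (ih ▸ hp), ih]

theorem bddAbove_range_of_stalls_above {s : ℕ → ℕ} (hs : Monotone s) {N : ℕ}
    (hstall : ∀ n, N ≤ s n → s (n + 1) = s n) : BddAbove (Set.range s) := by
  by_cases hreach : ∃ n₀, N ≤ s n₀
  · obtain ⟨n₀, hn₀⟩ := hreach
    refine ⟨s n₀, Set.forall_mem_range.2 fun n => ?_⟩
    rcases le_total n n₀ with hle | hge
    · exact hs hle
    · exact (eq_of_stalls_of_le hstall hn₀ hge).le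
  · push Not at hreach
    exact ⟨N, Set.forall_mem_range.2 fun n => (hreach n).le⟩

theorem injective_of_refuted {Cand Ex : Type*} {sat : Cand → Ex → Prop} {σ : ℕ → Cand}
    {E : ℕ → Set Ex} (hE : Monotone E) (hsat : ∀ n, ∀ e ∈ E n, sat (σ n) e)
    (hrefuted : ∀ n, ∃ e ∈ E (n + 1), ¬ sat (σ n) e) : Function.Injective σ := by
  refine Function.Injective.of_lt_imp_ne fun m n hmn hσ => ?_
  obtain ⟨e, he, hnsat⟩ := hrefuted m
  exact hnsat (hσ ▸ hsat n e (hE hmn he))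

theorem stratified_cegis_relative_completeness_general
    {Cand Ex : Type*} (Sat : Cand → Prop) (sat : Cand → Ex → Prop)
    (space : ℕ → Set Cand)
    (hfin : ∀ m, (space m).Finite)
    (hmono : ∀ m m', m ≤ m' → space m ⊆ space m')
    (N : ℕ) (σstar : Cand) (hmem : σstar ∈ space N) :
    ¬ ∃ (σ : ℕ → Cand) (E : ℕ → Set Ex) (s : ℕ → ℕ),
      ∀ n : ℕ,
        -- (i) the n-th candidate is drawn from the current stratum
        σ n ∈ space (s n) ∧
        -- (ii) the n-th candidate satisfies all current examples
        (∀ e ∈ E n, sat (σ n) e) ∧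
        -- (iii) the n-th candidate is not a genuine solution
        ¬ Sat (σ n) ∧
        -- (iv) a new counterexample refutes the n-th candidate
        (∃ e ∈ E (n + 1), ¬ sat (σ n) e) ∧
        -- (v) examples grow monotonically and are satisfied by σ*
        E n ⊆ E (n + 1) ∧ (∀ e ∈ E n, sat σstar e) ∧
        -- (vi) strata grow monotonically, and are only enlarged when the
        -- current stratum contains no candidate consistent with the examples
        s n ≤ s (n + 1) ∧
        (s (n + 1) ≠ s n →
          ¬ ∃ c ∈ space (s n), ∀ e ∈ E (n + 1), sat c e) := by
  rintro ⟨σ, E, s, h⟩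
  choose hσ hsat _ hrefuted hE hstar hs hjump using h
  have hstall : ∀ n, N ≤ s n → s (n + 1) = s n := fun n hN =>
    by_contra fun hne => hjump n hne ⟨σstar, hmono N (s n) hN hmem, hstar (n + 1)⟩
  obtain ⟨B, hB⟩ := bddAbove_range_of_stalls_above (monotone_nat_of_le_succ hs) hstall
  have hinj := injective_of_refuted (monotone_nat_of_le_succ hE) hsat hrefuted
  refine Set.infinite_range_of_injective hinj ((hfin B).subset ?_)
  rintro _ ⟨n, rfl⟩
  exact hmono (s n) B (hB ⟨n, rfl⟩) (hσ n)

/-- Theorem 5 (abstract form): relative completeness of stratified CEGIS.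
If some stratum of the template family contains a genuine solution, then the
stratified CEGIS loop cannot run forever. -/
theorem stratified_cegis_relative_completeness
    {Cand Ex : Type*} (Sat : Cand → Prop) (sat : Cand → Ex → Prop)
    (space : ℕ → Set Cand)
    (hfin : ∀ m, (space m).Finite)
    (hmono : ∀ m m', m ≤ m' → space m ⊆ space m')
    (N : ℕ) (σstar : Cand) (hmem : σstar ∈ space N) (hSat : Sat σstar) :
    ¬ ∃ (σ : ℕ → Cand) (E : ℕ → Set Ex) (s : ℕ → ℕ),
      ∀ n : ℕ,
        -- (i) the n-th candidate is drawn from the current stratum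
        σ n ∈ space (s n) ∧
        -- (ii) the n-th candidate satisfies all current examples
        (∀ e ∈ E n, sat (σ n) e) ∧
        -- (iii) the n-th candidate is not a genuine solution
        ¬ Sat (σ n) ∧
        -- (iv) a new counterexample refutes the n-th candidate
        (∃ e ∈ E (n + 1), ¬ sat (σ n) e) ∧
        -- (v) examples grow monotonically and are satisfied by σ*
        E n ⊆ E (n + 1) ∧ (∀ e ∈ E n, sat σstar e) ∧
        -- (vi) strata grow monotonically, and are only enlarged when the
        -- current stratum contains no candidate consistent with the examples
        s n ≤ s (n + 1) ∧
        (s (n + 1) ≠ s n →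
          ¬ ∃ c ∈ space (s n), ∀ e ∈ E (n + 1), sat c e) :=
  stratified_cegis_relative_completeness_general Sat sat space hfin hmono N σstar hmem
end

section
/- Trace-following lemma (core of the 'if' direction of Theorem 1): Let k ≥ 1 and let P_1, …, P_k be programs on σ_1, …, σ_k. Suppose predicates inv and sch_A (for every nonempty A ⊆ {1, …, k}) on k-tuples of states satisfy clauses (3), (4), and (5) of C_S. For each i, let π_i : ℕ → σ_i and L_i ∈ ℕ be such that T_i(π_i(j), π_i(j+1)) for all j < L_i and F_i(π_i(L_i)). If inv(π_1(0), …, π_k(0)) holds, then inv(π_1(L_1), …, π_k(L_k)) holds. -/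
/-!
Run the traces in lockstep, starting from the initial positions. As long as some trace is not
yet in a final state, clause (5) provides a schedule `A`, clause (3) lets every trace in `A` take
one step (a trace already at its end takes the self-loop), and clause (4) guarantees that at least
one of them really advances, so the total number of remaining steps decreases. When every trace
sits in a final state, it stays there until its end, so the invariant holds at the ends.
-/

theorem trace_eq_of_final {α : Type*} {T : α → α → Prop} {F : α → Prop}
    (hFinFix : ∀ v v', F v → T v v' → v' = v) {π : ℕ → α} {L m : ℕ}
    (hstep : ∀ j < L, T (π j) (π (j + 1))) (hm : m ≤ L) (hF : F (π m)) :
    π L = π m := by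
  induction L, hm using Nat.le_induction with
  | base => rfl
  | succ n _ ih =>
    have hn : π n = π m := ih fun j hj => hstep j (by omega)
    calc π (n + 1) = π n := hFinFix _ _ (hn ▸ hF) (hstep n n.lt_succ_self)
      _ = π m := hn

section Lockstep

variable {ι : Type*} {σ : ι → Type*} {T : ∀ i, σ i → σ i → Prop}
  {F : ∀ i, σ i → Prop} {π : ∀ i, ℕ → σ i} {L : ι → ℕ}

open Classical in
noncomputable def advance (A : Set ι) (p L : ι → ℕ) : ι → ℕ :=
  fun i => if i ∈ A ∧ p i < L i then p i + 1 else p i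

theorem advance_le {A : Set ι} {p : ι → ℕ} (hp : p ≤ L) : advance A p L ≤ L := by
  intro i
  unfold advance
  split_ifs with h
  · exact h.2
  · exact hp i

theorem advance_of_notMem {A : Set ι} {p : ι → ℕ} {i : ι} (hi : i ∉ A) :
    advance A p L i = p i := by
  simp [advance, hi]

theorem step_advance (hFinLoop : ∀ i v, F i v → T i v v)
    (hstep : ∀ i, ∀ j < L i, T i (π i j) (π i (j + 1))) (hfin : ∀ i, F i (π i (L i)))
    {A : Set ι} {p : ι → ℕ} (hp : p ≤ L) {i : ι} (hi : i ∈ A) :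
    T i (π i (p i)) (π i (advance A p L i)) := by
  by_cases hlt : p i < L i
  · simpa [advance, hi, hlt] using hstep i (p i) hlt
  · have hpi : p i = L i := le_antisymm (hp i) (not_lt.mp hlt)
    simpa [advance, hi, hlt, hpi] using hFinLoop i _ (hfin i)

theorem sum_sub_advance_lt [Fintype ι] {A : Set ι} {p : ι → ℕ} {i₀ : ι} (hi₀ : i₀ ∈ A)
    (hlt : p i₀ < L i₀) : ∑ i, (L i - advance A p L i) < ∑ i, (L i - p i) := by
  refine Finset.sum_lt_sum (fun i _ => by unfold advance; split_ifs <;> omega)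
    ⟨i₀, Finset.mem_univ _, ?_⟩
  simp only [advance, hi₀, hlt, and_self, if_true]
  omega

theorem inv_end_of_inv [Fintype ι] (hFinFix : ∀ i v v', F i v → T i v v' → v' = v)
    (hFinLoop : ∀ i v, F i v → T i v v)
    {inv : (∀ i, σ i) → Prop} {sch : Set ι → (∀ i, σ i) → Prop}
    (h3 : ∀ A : Set ι, A.Nonempty → ∀ x x' : ∀ i, σ i,
      inv x → sch A x → (∀ i ∈ A, T i (x i) (x' i)) → (∀ i ∉ A, x' i = x i) → inv x')
    (h4 : ∀ A : Set ι, A.Nonempty → ∀ x : ∀ i, σ i,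
      inv x → sch A x → (∃ i, ¬ F i (x i)) → ∃ i ∈ A, ¬ F i (x i))
    (h5 : ∀ x : ∀ i, σ i, inv x → (∃ i, ¬ F i (x i)) → ∃ A : Set ι, A.Nonempty ∧ sch A x)
    (hstep : ∀ i, ∀ j < L i, T i (π i j) (π i (j + 1))) (hfin : ∀ i, F i (π i (L i)))
    (p : ι → ℕ) (hp : p ≤ L) (hinv : inv fun i => π i (p i)) :
    inv fun i => π i (L i) := by
  by_cases hall : ∀ i, F i (π i (p i))
  · have hend : (fun i => π i (L i)) = fun i => π i (p i) :=
      funext fun i => trace_eq_of_final (hFinFix i) (hstep i) (hp i) (hall i)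
    rwa [hend]
  · push Not at hall
    obtain ⟨A, hA, hsch⟩ := h5 _ hinv hall
    obtain ⟨i₀, hi₀, hnf⟩ := h4 A hA _ hinv hsch hall
    have hlt : p i₀ < L i₀ :=
      (hp i₀).lt_of_ne fun h => hnf (h ▸ hfin i₀)
    exact inv_end_of_inv hFinFix hFinLoop h3 h4 h5 hstep hfin (advance A p L) (advance_le hp)
      (h3 A hA _ _ hinv hsch (fun i hi => step_advance hFinLoop hstep hfin hp hi)
        (fun i hi => congrArg (π i) (advance_of_notMem hi)))
termination_by ∑ i, (L i - p i)
decreasing_by exact sum_sub_advance_lt hi₀ hlt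

end Lockstep

theorem ksafety_trace_following_general
    {k : ℕ} {σ : Fin k → Type*}
    (T : ∀ i, σ i → σ i → Prop) (F : ∀ i, σ i → Prop)
    (hFinFix : ∀ i v v', F i v → T i v v' → v' = v)
    (hFinLoop : ∀ i v, F i v → T i v v)
    (inv : (∀ i, σ i) → Prop) (sch : Set (Fin k) → (∀ i, σ i) → Prop)
    -- clause (3)
    (h3 : ∀ A : Set (Fin k), A.Nonempty → ∀ x x' : ∀ i, σ i,
      inv x → sch A x → (∀ i ∈ A, T i (x i) (x' i)) → (∀ i ∉ A, x' i = x i) →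
      inv x')
    -- clause (4)
    (h4 : ∀ A : Set (Fin k), A.Nonempty → ∀ x : ∀ i, σ i,
      inv x → sch A x → (∃ i, ¬ F i (x i)) → ∃ i ∈ A, ¬ F i (x i))
    -- clause (5)
    (h5 : ∀ x : ∀ i, σ i, inv x → (∃ i, ¬ F i (x i)) →
      ∃ A : Set (Fin k), A.Nonempty ∧ sch A x)
    (π : ∀ i, ℕ → σ i) (L : Fin k → ℕ)
    (hstep : ∀ i, ∀ j < L i, T i (π i j) (π i (j + 1)))
    (hfin : ∀ i, F i (π i (L i)))
    (hinit : inv (fun i => π i 0)) :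
    inv (fun i => π i (L i)) :=
  inv_end_of_inv hFinFix hFinLoop h3 h4 h5 hstep hfin 0 (fun i => Nat.zero_le (L i)) hinit

/-- Trace-following lemma: the core of the 'if' direction of Theorem 1. -/
theorem ksafety_trace_following
    {k : ℕ} (hk : 1 ≤ k) {σ : Fin k → Type*}
    (T : ∀ i, σ i → σ i → Prop) (F : ∀ i, σ i → Prop)
    (hFinFix : ∀ i v v', F i v → T i v v' → v' = v)
    (hFinLoop : ∀ i v, F i v → T i v v)
    (inv : (∀ i, σ i) → Prop) (sch : Set (Fin k) → (∀ i, σ i) → Prop)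
    -- clause (3)
    (h3 : ∀ A : Set (Fin k), A.Nonempty → ∀ x x' : ∀ i, σ i,
      inv x → sch A x → (∀ i ∈ A, T i (x i) (x' i)) → (∀ i ∉ A, x' i = x i) →
      inv x')
    -- clause (4)
    (h4 : ∀ A : Set (Fin k), A.Nonempty → ∀ x : ∀ i, σ i,
      inv x → sch A x → (∃ i, ¬ F i (x i)) → ∃ i ∈ A, ¬ F i (x i))
    -- clause (5)
    (h5 : ∀ x : ∀ i, σ i, inv x → (∃ i, ¬ F i (x i)) →
      ∃ A : Set (Fin k), A.Nonempty ∧ sch A x)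
    (π : ∀ i, ℕ → σ i) (L : Fin k → ℕ)
    (hstep : ∀ i, ∀ j < L i, T i (π i j) (π i (j + 1)))
    (hfin : ∀ i, F i (π i (L i)))
    (hinit : inv (fun i => π i 0)) :
    inv (fun i => π i (L i)) :=
  ksafety_trace_following_general T F hFinFix hFinLoop inv sch h3 h4 h5 π L hstep hfin hinit
end

section
/- Lock-step solution lemma (the 'only-if' direction of Theorem 1): Let k ≥ 1, programs P_1, …, P_k and predicates pre, post as above, and let LockReach be the reflexive–transitive closure of the relation Step(u⃗, v⃗) := ∀ i, T_i(u_i, v_i) on k-tuples of states. If the programs satisfy the k-safety property with respect to (pre, post), then defining inv(x⃗) := ∃ u⃗, pre(u⃗) ∧ LockReach(u⃗, x⃗), sch_{{1,…,k}}(x⃗) := True, and sch_A(x⃗) := False for every nonempty A ≠ {1, …, k}, yields a semantic solution of C_S (i.e., clauses (1)–(5) hold). -/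
/-- One lock-step move of the k programs. -/
def LockStep {k : ℕ} {σ : Fin k → Type*} (T : ∀ i, σ i → σ i → Prop)
    (u v : ∀ i, σ i) : Prop :=
  ∀ i, T i (u i) (v i)

/-- Lock-step reachability: reflexive–transitive closure of `LockStep`. -/
def LockReach {k : ℕ} {σ : Fin k → Type*} (T : ∀ i, σ i → σ i → Prop) :
    (∀ i, σ i) → (∀ i, σ i) → Prop :=
  Relation.ReflTransGen (LockStep T)

/-- The lock-step invariant: tuples lock-step reachable from a `pre`-tuple. -/
def LockInv {k : ℕ} {σ : Fin k → Type*} (T : ∀ i, σ i → σ i → Prop)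
    (pre : (∀ i, σ i) → Prop) (x : ∀ i, σ i) : Prop :=
  ∃ u : ∀ i, σ i, pre u ∧ LockReach T u x

/-- The lock-step scheduler: `sch_{1,…,k}` is `True`, and `sch_A` is `False`
for every other nonempty `A`. -/
def LockSch {k : ℕ} {σ : Fin k → Type*} (A : Set (Fin k)) (_x : ∀ i, σ i) : Prop :=
  A = Set.univ

theorem Relation.ReflTransGen.exists_seq {α : Type*} {r : α → α → Prop} {a b : α}
    (h : Relation.ReflTransGen r a b) :
    ∃ (n : ℕ) (u : ℕ → α), u 0 = a ∧ (∀ j < n, r (u j) (u (j + 1))) ∧ u n = b := by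
  induction h using Relation.ReflTransGen.head_induction_on with
  | refl => exact ⟨0, fun _ => b, rfl, by simp, rfl⟩
  | @head a c hac _ ih =>
    obtain ⟨n, u, hu0, hstep, hun⟩ := ih
    refine ⟨n + 1, fun j => Nat.casesOn j a u, rfl, ?_, hun⟩
    rintro (_ | j) hj
    · simpa [hu0] using hac
    · exact hstep j (by omega)

theorem reach_of_reflTransGen {σ : Type*} {T : σ → σ → Prop} {F : σ → Prop} {v v' : σ}
    (h : Relation.ReflTransGen T v v') (hF : F v') : Reach T F v v' :=
  let ⟨n, u, hu0, hstep, hun⟩ := h.exists_seq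
  ⟨n, u, hu0, hstep, hun, hF⟩

theorem LockReach.reflTransGen_apply {k : ℕ} {σ : Fin k → Type*}
    {T : ∀ i, σ i → σ i → Prop} {u x : ∀ i, σ i} (h : LockReach T u x) (i : Fin k) :
    Relation.ReflTransGen (T i) (u i) (x i) :=
  h.lift (fun v => v i) fun _ _ hstep => hstep i

theorem ksafety_lockstep_solution_general
    {k : ℕ} (hk : 1 ≤ k) {σ : Fin k → Type*}
    (T : ∀ i, σ i → σ i → Prop) (F : ∀ i, σ i → Prop)
    (pre post : (∀ i, σ i) → Prop)
    (hsafe : ∀ v v' : ∀ i, σ i, pre v →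
      (∀ i, Reach (T i) (F i) (v i) (v' i)) → post v') :
    -- (1)
    (∀ x, pre x → LockInv T pre x) ∧
    -- (2)
    (∀ x, LockInv T pre x → (∀ i, F i (x i)) → post x) ∧
    -- (3)
    (∀ A : Set (Fin k), A.Nonempty → ∀ x x' : ∀ i, σ i,
      LockInv T pre x → LockSch A x → (∀ i ∈ A, T i (x i) (x' i)) →
      (∀ i ∉ A, x' i = x i) → LockInv T pre x') ∧
    -- (4)
    (∀ A : Set (Fin k), A.Nonempty → ∀ x : ∀ i, σ i,
      LockInv T pre x → LockSch A x → (∃ i, ¬ F i (x i)) →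
      ∃ i ∈ A, ¬ F i (x i)) ∧
    -- (5)
    (∀ x : ∀ i, σ i, LockInv T pre x → (∃ i, ¬ F i (x i)) →
      ∃ A : Set (Fin k), A.Nonempty ∧ LockSch A x) := by
  refine ⟨fun x hx => ⟨x, hx, .refl⟩, ?_, ?_, ?_, ?_⟩
  · rintro x ⟨u, hu, hreach⟩ hF
    exact hsafe u x hu fun i => reach_of_reflTransGen (hreach.reflTransGen_apply i) (hF i)
  · rintro A - x x' ⟨u, hu, hreach⟩ (rfl : A = Set.univ) hT -
    exact ⟨u, hu, hreach.tail fun i => hT i (Set.mem_univ i)⟩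
  · rintro A - x - (rfl : A = Set.univ) ⟨i, hi⟩
    exact ⟨i, Set.mem_univ i, hi⟩
  · exact fun _ _ _ => ⟨Set.univ, ⟨⟨0, hk⟩, Set.mem_univ _⟩, rfl⟩

/-- Lock-step solution lemma: the 'only-if' direction of Theorem 1. -/
theorem ksafety_lockstep_solution
    {k : ℕ} (hk : 1 ≤ k) {σ : Fin k → Type*}
    (T : ∀ i, σ i → σ i → Prop) (F : ∀ i, σ i → Prop)
    (hFinFix : ∀ i v v', F i v → T i v v' → v' = v)
    (hFinLoop : ∀ i v, F i v → T i v v)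
    (pre post : (∀ i, σ i) → Prop)
    (hsafe : ∀ v v' : ∀ i, σ i, pre v →
      (∀ i, Reach (T i) (F i) (v i) (v' i)) → post v') :
    -- (1)
    (∀ x, pre x → LockInv T pre x) ∧
    -- (2)
    (∀ x, LockInv T pre x → (∀ i, F i (x i)) → post x) ∧
    -- (3)
    (∀ A : Set (Fin k), A.Nonempty → ∀ x x' : ∀ i, σ i,
      LockInv T pre x → LockSch A x → (∀ i ∈ A, T i (x i) (x' i)) →
      (∀ i ∉ A, x' i = x i) → LockInv T pre x') ∧
    -- (4)
    (∀ A : Set (Fin k), A.Nonempty → ∀ x : ∀ i, σ i,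
      LockInv T pre x → LockSch A x → (∃ i, ¬ F i (x i)) →
      ∃ i ∈ A, ¬ F i (x i)) ∧
    -- (5)
    (∀ x : ∀ i, σ i, LockInv T pre x → (∃ i, ¬ F i (x i)) →
      ∃ A : Set (Fin k), A.Nonempty ∧ LockSch A x) :=
  ksafety_lockstep_solution_general hk T F pre post hsafe
end

section
/- Divergence-exclusion lemma for C_CoT (Lemma 1 in the appendix of the paper): Let P_1 = (T_1, F_1) on σ_1 and P_2 = (T_2, F_2) on σ_2 be programs. Suppose predicates inv, sch_TT, sch_FT, sch_TF on ℤ × ℤ × σ_1 × σ_2 and a well-founded relation wfr on σ_2 satisfy clauses (3a), (3c), (4a), (4b), (5), and (6) of C_CoT. Let ϖ : ℕ → σ_2 be an infinite sequence with ¬F_2(ϖ(j)) and T_2(ϖ(j), ϖ(j+1)) for all j ≥ 0, and let v_1 ∈ σ_1 with F_1(v_1). Then inv(d, c, v_1, ϖ(j)) is false for all d, c ∈ ℤ and all j ≥ 0. -/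
theorem NoInfChain.forall_not_of_step {τ : Type*} {W : τ → τ → Prop} (hW : NoInfChain W)
    {P : τ → Prop} (u : ℕ → τ) (hstep : ∀ k, P (u k) → P (u (k + 1)))
    (hchain : ∀ k, P (u k) → W (u k) (u (k + 1))) (j : ℕ) : ¬ P (u j) := by
  intro hj
  have hP : ∀ k, P (u (j + k)) := by
    intro k
    induction k with
    | zero => exact hj
    | succ k ih => exact hstep (j + k) ih
  exact hW ⟨fun k => u (j + k), fun k => hchain (j + k) (hP k)⟩

theorem inv_of_final_left_step {σ₁ σ₂ : Type*}
    {T₁ : σ₁ → σ₁ → Prop} {F₁ : σ₁ → Prop} {T₂ : σ₂ → σ₂ → Prop} {F₂ : σ₂ → Prop}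
    {inv schTT schFT schTF : ℤ → ℤ → σ₁ → σ₂ → Prop}
    (hFinLoop₁ : ∀ v, F₁ v → T₁ v v)
    (h3a : ∀ d d' b x₁ x₂ x₂', inv d b x₁ x₂ → schFT d b x₁ x₂ → T₂ x₂ x₂' →
      (F₁ x₁ ∨ F₂ x₂ ∨ d' = d - 1) → inv d' b x₁ x₂')
    (h3c : ∀ d b x₁ x₁' x₂ x₂', inv d b x₁ x₂ → schTT d b x₁ x₂ → T₁ x₁ x₁' →
      T₂ x₂ x₂' → inv d b x₁' x₂')
    (h4b : ∀ d b x₁ x₂, inv d b x₁ x₂ → schTF d b x₁ x₂ → ¬ F₂ x₂ → ¬ F₁ x₁)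
    (h5 : ∀ d b x₁ x₂, inv d b x₁ x₂ → (¬ F₁ x₁ ∨ ¬ F₂ x₂) →
      schTT d b x₁ x₂ ∨ schFT d b x₁ x₂ ∨ schTF d b x₁ x₂)
    {d b : ℤ} {x₁ : σ₁} {x₂ x₂' : σ₂} (hx₁ : F₁ x₁) (hx₂ : ¬ F₂ x₂) (hT₂ : T₂ x₂ x₂')
    (hinv : inv d b x₁ x₂) : inv d b x₁ x₂' := by
  rcases h5 d b x₁ x₂ hinv (Or.inr hx₂) with hTT | hFT | hTF
  · exact h3c d b x₁ x₁ x₂ x₂' hinv hTT (hFinLoop₁ x₁ hx₁) hT₂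
  · exact h3a d d b x₁ x₂ x₂' hinv hFT hT₂ (Or.inl hx₁)
  · exact absurd hx₁ (h4b d b x₁ x₂ hinv hTF hx₂)

theorem coterm_divergence_exclusion_general
    {σ₁ σ₂ : Type*}
    (T₁ : σ₁ → σ₁ → Prop) (F₁ : σ₁ → Prop)
    (T₂ : σ₂ → σ₂ → Prop) (F₂ : σ₂ → Prop)
    (hFinLoop₁ : ∀ v, F₁ v → T₁ v v)
    (inv schTT schFT schTF : ℤ → ℤ → σ₁ → σ₂ → Prop)
    (wfr : σ₂ → σ₂ → Prop) (hwf : NoInfChain wfr)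
    -- (3a)
    (h3a : ∀ d d' b x₁ x₂ x₂', inv d b x₁ x₂ → schFT d b x₁ x₂ → T₂ x₂ x₂' →
      (F₁ x₁ ∨ F₂ x₂ ∨ d' = d - 1) → inv d' b x₁ x₂')
    -- (3c)
    (h3c : ∀ d b x₁ x₁' x₂ x₂', inv d b x₁ x₂ → schTT d b x₁ x₂ → T₁ x₁ x₁' →
      T₂ x₂ x₂' → inv d b x₁' x₂')
    -- (4b)
    (h4b : ∀ d b x₁ x₂, inv d b x₁ x₂ → schTF d b x₁ x₂ → ¬ F₂ x₂ → ¬ F₁ x₁)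
    -- (5)
    (h5 : ∀ d b x₁ x₂, inv d b x₁ x₂ → (¬ F₁ x₁ ∨ ¬ F₂ x₂) →
      schTT d b x₁ x₂ ∨ schFT d b x₁ x₂ ∨ schTF d b x₁ x₂)
    -- (6)
    (h6 : ∀ d b x₁ x₂ x₂', inv d b x₁ x₂ → F₁ x₁ → ¬ F₂ x₂ → T₂ x₂ x₂' →
      wfr x₂ x₂')
    (ϖ : ℕ → σ₂) (hϖF : ∀ j, ¬ F₂ (ϖ j)) (hϖT : ∀ j, T₂ (ϖ j) (ϖ (j + 1)))
    (v₁ : σ₁) (hv₁ : F₁ v₁) :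
    ∀ (d c : ℤ) (j : ℕ), ¬ inv d c v₁ (ϖ j) := by
  intro d c
  exact hwf.forall_not_of_step ϖ
    (fun k => inv_of_final_left_step hFinLoop₁ h3a h3c h4b h5 hv₁ (hϖF k) (hϖT k))
    (fun k hk => h6 d c v₁ (ϖ k) (ϖ (k + 1)) hk hv₁ (hϖF k) (hϖT k))

/-- Divergence-exclusion lemma for C_CoT (Lemma 1 in the appendix). -/
theorem coterm_divergence_exclusion
    {σ₁ σ₂ : Type*}
    (T₁ : σ₁ → σ₁ → Prop) (F₁ : σ₁ → Prop)
    (T₂ : σ₂ → σ₂ → Prop) (F₂ : σ₂ → Prop)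
    (hFinFix₁ : ∀ v v', F₁ v → T₁ v v' → v' = v) (hFinLoop₁ : ∀ v, F₁ v → T₁ v v)
    (hFinFix₂ : ∀ v v', F₂ v → T₂ v v' → v' = v) (hFinLoop₂ : ∀ v, F₂ v → T₂ v v)
    (inv schTT schFT schTF : ℤ → ℤ → σ₁ → σ₂ → Prop)
    (wfr : σ₂ → σ₂ → Prop) (hwf : NoInfChain wfr)
    -- (3a)
    (h3a : ∀ d d' b x₁ x₂ x₂', inv d b x₁ x₂ → schFT d b x₁ x₂ → T₂ x₂ x₂' →
      (F₁ x₁ ∨ F₂ x₂ ∨ d' = d - 1) → inv d' b x₁ x₂')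
    -- (3c)
    (h3c : ∀ d b x₁ x₁' x₂ x₂', inv d b x₁ x₂ → schTT d b x₁ x₂ → T₁ x₁ x₁' →
      T₂ x₂ x₂' → inv d b x₁' x₂')
    -- (4a)
    (h4a : ∀ d b x₁ x₂, inv d b x₁ x₂ → schFT d b x₁ x₂ → ¬ F₁ x₁ → ¬ F₂ x₂)
    -- (4b)
    (h4b : ∀ d b x₁ x₂, inv d b x₁ x₂ → schTF d b x₁ x₂ → ¬ F₂ x₂ → ¬ F₁ x₁)
    -- (5)
    (h5 : ∀ d b x₁ x₂, inv d b x₁ x₂ → (¬ F₁ x₁ ∨ ¬ F₂ x₂) →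
      schTT d b x₁ x₂ ∨ schFT d b x₁ x₂ ∨ schTF d b x₁ x₂)
    -- (6)
    (h6 : ∀ d b x₁ x₂ x₂', inv d b x₁ x₂ → F₁ x₁ → ¬ F₂ x₂ → T₂ x₂ x₂' →
      wfr x₂ x₂')
    (ϖ : ℕ → σ₂) (hϖF : ∀ j, ¬ F₂ (ϖ j)) (hϖT : ∀ j, T₂ (ϖ j) (ϖ (j + 1)))
    (v₁ : σ₁) (hv₁ : F₁ v₁) :
    ∀ (d c : ℤ) (j : ℕ), ¬ inv d c v₁ (ϖ j) :=
  coterm_divergence_exclusion_general T₁ F₁ T₂ F₂ hFinLoop₁ inv schTT schFT schTF wfr hwf h3a h3c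
    h4b h5 h6 ϖ hϖF hϖT v₁ hv₁
end

section
/- Well-foundedness of the residual transition relation under co-termination (from the 'only-if' direction of Theorem 2): Let P_1 = (T_1, F_1) on σ_1 and P_2 = (T_2, F_2) on σ_2 be programs and pre a predicate on σ_1 × σ_2. Let LockReach2 be the reflexive–transitive closure of the relation Step((u_1, u_2), (v_1, v_2)) := T_1(u_1, v_1) ∧ T_2(u_2, v_2) on σ_1 × σ_2, and define R := { w ∈ σ_2 : ¬F_2(w) ∧ ∃ u_1 u_2 v_1, pre(u_1, u_2) ∧ LockReach2((u_1, u_2), (v_1, w)) ∧ F_1(v_1) }. If P_1, P_2 satisfy co-termination with respect to pre, then there is no infinite sequence w_0, w_1, … with w_j ∈ R and T_2(w_j, w_{j+1}) for all j ≥ 0 (i.e., the restriction of T_2 to R is well-founded). -/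
/-- One lock-step move of the two programs. -/
def LockStep2 {σ₁ σ₂ : Type*} (T₁ : σ₁ → σ₁ → Prop) (T₂ : σ₂ → σ₂ → Prop)
    (u v : σ₁ × σ₂) : Prop :=
  T₁ u.1 v.1 ∧ T₂ u.2 v.2

/-- Lock-step reachability of the two programs. -/
def LockReach2 {σ₁ σ₂ : Type*} (T₁ : σ₁ → σ₁ → Prop) (T₂ : σ₂ → σ₂ → Prop) :
    σ₁ × σ₂ → σ₁ × σ₂ → Prop :=
  Relation.ReflTransGen (LockStep2 T₁ T₂)

/-!
A residual chain `w` starts at the `P₂`-side `w 0` of a lock-step run from a `pre`-pair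
`(u₁, u₂)` whose `P₁`-side ends in a final state, so `P₁` terminates from `u₁`.
Since final states of `P₂` are absorbing and `w 0` is not final, no state of the `P₂`-side
run is final; prefixed to `w`, it is a diverging run of `P₂` from `u₂`, against co-termination.
-/

section Programs

variable {σ : Type*} {T : σ → σ → Prop} {F : σ → Prop}

theorem Reach.of_reflTransGen {v v' : σ} (h : Relation.ReflTransGen T v v') (hF : F v') :
    Reach T F v v' := by
  induction h using Relation.ReflTransGen.head_induction_on with
  | refl => exact ⟨0, fun _ => v', rfl, fun _ hj => absurd hj (Nat.not_lt_zero _), rfl, hF⟩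
  | head hstep _ ih =>
    obtain ⟨n, u, hu0, hu, hun, hF⟩ := ih
    refine ⟨n + 1, Stream'.cons _ u, rfl, ?_, hun, hF⟩
    rintro (_ | j) hj
    · show T _ (u 0)
      rwa [hu0]
    · exact hu j (by omega)

theorem Diverge.of_step (hfix : ∀ v v', F v → T v v' → v' = v) {a b : σ}
    (hab : T a b) (hb : Diverge T F b) : Diverge T F a := by
  by_cases ha : F a
  · exact hfix a b ha hab ▸ hb
  obtain ⟨u, hu0, hu, hnf⟩ := hb
  refine ⟨Stream'.cons a u, rfl, ?_, ?_⟩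
  · rintro (_ | j)
    · show T a (u 0)
      rwa [hu0]
    · exact hu j
  · rintro (_ | j)
    · exact ha
    · exact hnf j

theorem Diverge.of_reflTransGen (hfix : ∀ v v', F v → T v v' → v' = v) {a b : σ}
    (hab : Relation.ReflTransGen T a b) (hb : Diverge T F b) : Diverge T F a := by
  induction hab using Relation.ReflTransGen.head_induction_on with
  | refl => exact hb
  | head hstep _ ih => exact Diverge.of_step hfix hstep ih

end Programs

section LockStep

variable {σ₁ σ₂ : Type*} {T₁ : σ₁ → σ₁ → Prop} {T₂ : σ₂ → σ₂ → Prop} {u v : σ₁ × σ₂}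

theorem LockReach2.fst (h : LockReach2 T₁ T₂ u v) : Relation.ReflTransGen T₁ u.1 v.1 :=
  h.lift Prod.fst fun _ _ hstep => hstep.1

theorem LockReach2.snd (h : LockReach2 T₁ T₂ u v) : Relation.ReflTransGen T₂ u.2 v.2 :=
  h.lift Prod.snd fun _ _ hstep => hstep.2

end LockStep

theorem coterm_residual_wellfounded_general
    {σ₁ σ₂ : Type*}
    (T₁ : σ₁ → σ₁ → Prop) (F₁ : σ₁ → Prop)
    (T₂ : σ₂ → σ₂ → Prop) (F₂ : σ₂ → Prop)
    (hFinFix₂ : ∀ v v', F₂ v → T₂ v v' → v' = v)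
    (pre : σ₁ → σ₂ → Prop)
    (hcoterm : ∀ v₁ v₂ v₁', pre v₁ v₂ → Reach T₁ F₁ v₁ v₁' → ¬ Diverge T₂ F₂ v₂) :
    ¬ ∃ w : ℕ → σ₂,
      (∀ j, (¬ F₂ (w j) ∧ ∃ u₁ u₂ v₁, pre u₁ u₂ ∧
        LockReach2 T₁ T₂ (u₁, u₂) (v₁, w j) ∧ F₁ v₁)) ∧
      (∀ j, T₂ (w j) (w (j + 1))) := by
  rintro ⟨w, hresidual, hstep⟩
  obtain ⟨-, u₁, u₂, v₁, hpre, hlock, hF₁⟩ := hresidual 0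
  have hdiv : Diverge T₂ F₂ (w 0) := ⟨w, rfl, hstep, fun j => (hresidual j).1⟩
  exact hcoterm u₁ u₂ v₁ hpre (Reach.of_reflTransGen hlock.fst hF₁)
    (Diverge.of_reflTransGen hFinFix₂ hlock.snd hdiv)

/-- Well-foundedness of the residual transition relation under co-termination
(from the 'only-if' direction of Theorem 2). -/
theorem coterm_residual_wellfounded
    {σ₁ σ₂ : Type*}
    (T₁ : σ₁ → σ₁ → Prop) (F₁ : σ₁ → Prop)
    (T₂ : σ₂ → σ₂ → Prop) (F₂ : σ₂ → Prop)
    (hFinFix₁ : ∀ v v', F₁ v → T₁ v v' → v' = v) (hFinLoop₁ : ∀ v, F₁ v → T₁ v v)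
    (hFinFix₂ : ∀ v v', F₂ v → T₂ v v' → v' = v) (hFinLoop₂ : ∀ v, F₂ v → T₂ v v)
    (pre : σ₁ → σ₂ → Prop)
    (hcoterm : ∀ v₁ v₂ v₁', pre v₁ v₂ → Reach T₁ F₁ v₁ v₁' → ¬ Diverge T₂ F₂ v₂) :
    ¬ ∃ w : ℕ → σ₂,
      (∀ j, (¬ F₂ (w j) ∧ ∃ u₁ u₂ v₁, pre u₁ u₂ ∧
        LockReach2 T₁ T₂ (u₁, u₂) (v₁, w j) ∧ F₁ v₁)) ∧
      (∀ j, T₂ (w j) (w (j + 1))) :=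
  coterm_residual_wellfounded_general T₁ F₁ T₂ F₂ hFinFix₂ pre hcoterm
end

section
/- Determinization soundness for TI-GNI (from the 'if' direction of Theorem 3): Under the stated assumptions on U_2 (including totality), let f : σ_1 × σ_2 → R be any function and suppose that for all v_1, v_2, v_1', w': pre(v_1, v_2), v_1 ⇓_1 v_1', and (v_1', v_2) ⇓^f (v_1', w') imply post(v_1', w'). Then P_1, P_2 satisfy TI-GNI with respect to (pre, post). -/
/-- Transition relation of the `f`-determinized program `P₂^f` on `σ₁ × σ₂`. -/
def DetT {σ₁ σ₂ R : Type*} (U₂ : R → σ₂ → σ₂ → Prop) (f : σ₁ × σ₂ → R) :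
    σ₁ × σ₂ → σ₁ × σ₂ → Prop :=
  fun pw pw' => pw'.1 = pw.1 ∧ U₂ (f (pw.1, pw.2)) pw.2 pw'.2

/-- Final-state predicate of the `f`-determinized program `P₂^f`. -/
def DetF {σ₁ σ₂ : Type*} (F₂ : σ₂ → Prop) : σ₁ × σ₂ → Prop :=
  fun pw => F₂ pw.2

/-!
Run the `f`-determinized program from `(v₁', v₂)`. By totality of `U₂` every state of `P₂^f` has
a successor, so the run either reaches a final state or diverges. Its first component stays
`v₁'` and each of its steps projects to a step of `P₂`, so projecting to `σ₂` turns a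
terminating run into a terminating run of `P₂` whose end state satisfies `post` by hypothesis,
and a diverging run into a diverging run of `P₂`.
-/

section Runs

variable {σ τ : Type*} {T : σ → σ → Prop} {F : σ → Prop}

theorem Reach.invariant {P : σ → Prop} (hstep : ∀ a b, T a b → P a → P b) {v v' : σ}
    (hv : P v) (h : Reach T F v v') : P v' := by
  obtain ⟨n, u, rfl, hu, rfl, -⟩ := h
  have key : ∀ j ≤ n, P (u j) := by
    intro j hj
    induction j with
    | zero => exact hv
    | succ j ih => exact hstep _ _ (hu j hj) (ih (Nat.le_of_succ_le hj))
  exact key n le_rfl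

theorem Reach.map {T' : τ → τ → Prop} {F' : τ → Prop} (g : σ → τ)
    (hT : ∀ a b, T a b → T' (g a) (g b)) (hF : ∀ a, F a → F' (g a)) {v v' : σ}
    (h : Reach T F v v') : Reach T' F' (g v) (g v') := by
  obtain ⟨n, u, rfl, hu, rfl, hfin⟩ := h
  exact ⟨n, g ∘ u, rfl, fun j hj => hT _ _ (hu j hj), rfl, hF _ hfin⟩

theorem Diverge.map {T' : τ → τ → Prop} {F' : τ → Prop} (g : σ → τ)
    (hT : ∀ a b, T a b → T' (g a) (g b)) (hF : ∀ a, F' (g a) → F a) {v : σ}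
    (h : Diverge T F v) : Diverge T' F' (g v) := by
  obtain ⟨u, rfl, hu, hnf⟩ := h
  exact ⟨g ∘ u, rfl, fun j => hT _ _ (hu j), fun j hj => hnf j (hF _ hj)⟩

theorem exists_run_of_total (htot : ∀ a, ∃ b, T a b) (v : σ) :
    ∃ u : ℕ → σ, u 0 = v ∧ ∀ j, T (u j) (u (j + 1)) := by
  choose next hnext using htot
  exact ⟨fun j => next^[j] v, rfl, fun j => by
    simpa only [Function.iterate_succ_apply'] using hnext (next^[j] v)⟩

theorem reach_or_diverge_of_total (htot : ∀ a, ∃ b, T a b) (v : σ) :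
    (∃ v', Reach T F v v') ∨ Diverge T F v := by
  obtain ⟨u, hu0, hu⟩ := exists_run_of_total htot v
  by_cases hfin : ∃ n, F (u n)
  · obtain ⟨n, hn⟩ := hfin
    exact Or.inl ⟨u n, n, u, hu0, fun j _ => hu j, rfl, hn⟩
  · exact Or.inr ⟨u, hu0, hu, fun j hj => hfin ⟨j, hj⟩⟩

end Runs

section Determinization

variable {σ₁ σ₂ R : Type*} {T₂ : σ₂ → σ₂ → Prop} {U₂ : R → σ₂ → σ₂ → Prop}

theorem detT_total (hU₂tot : ∀ r w, ∃ w', U₂ r w w') (f : σ₁ × σ₂ → R) (pw : σ₁ × σ₂) :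
    ∃ pw', DetT U₂ f pw pw' :=
  let ⟨w', hw'⟩ := hU₂tot (f (pw.1, pw.2)) pw.2
  ⟨(pw.1, w'), rfl, hw'⟩

theorem DetT.snd (hU₂T : ∀ w w', T₂ w w' ↔ ∃ r, U₂ r w w') {f : σ₁ × σ₂ → R}
    {pw pw' : σ₁ × σ₂} (h : DetT U₂ f pw pw') : T₂ pw.2 pw'.2 :=
  (hU₂T _ _).2 ⟨_, h.2⟩

theorem Reach.detT_fst {F₂ : σ₂ → Prop} {f : σ₁ × σ₂ → R} {pw pw' : σ₁ × σ₂}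
    (h : Reach (DetT U₂ f) (DetF F₂) pw pw') : pw'.1 = pw.1 :=
  h.invariant (P := fun qw => qw.1 = pw.1) (fun _ _ hstep hq => hstep.1.trans hq) rfl

end Determinization

theorem tigni_determinization_sound_general
    {σ₁ σ₂ : Type*} {R : Type*}
    (T₁ : σ₁ → σ₁ → Prop) (F₁ : σ₁ → Prop)
    (T₂ : σ₂ → σ₂ → Prop) (F₂ : σ₂ → Prop)
    (pre post : σ₁ → σ₂ → Prop)
    (U₂ : R → σ₂ → σ₂ → Prop)
    (hU₂T : ∀ w w', T₂ w w' ↔ ∃ r, U₂ r w w')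
    (hU₂tot : ∀ r w, ∃ w', U₂ r w w')
    (f : σ₁ × σ₂ → R)
    (hdet : ∀ v₁ v₂ v₁' w', pre v₁ v₂ → Reach T₁ F₁ v₁ v₁' →
      Reach (DetT U₂ f) (DetF F₂) (v₁', v₂) (v₁', w') → post v₁' w') :
    ∀ v₁ v₂ v₁', pre v₁ v₂ → Reach T₁ F₁ v₁ v₁' →
      (∃ v₂', Reach T₂ F₂ v₂ v₂' ∧ post v₁' v₂') ∨ Diverge T₂ F₂ v₂ := by
  intro v₁ v₂ v₁' hpre hreach₁
  rcases reach_or_diverge_of_total (F := DetF F₂) (detT_total hU₂tot f) (v₁', v₂) with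
    ⟨⟨p, w⟩, hreach⟩ | hdiv
  · obtain rfl : p = v₁' := hreach.detT_fst
    exact Or.inl ⟨w, hreach.map Prod.snd (fun _ _ => DetT.snd hU₂T) (fun _ h => h),
      hdet v₁ v₂ p w hpre hreach₁ hreach⟩
  · exact Or.inr (hdiv.map Prod.snd (fun _ _ => DetT.snd hU₂T) (fun _ h => h))

/-- Determinization soundness for TI-GNI (from the 'if' direction of Theorem 3). -/
theorem tigni_determinization_sound
    {σ₁ σ₂ : Type*} {R : Type*} [Nonempty R]
    (T₁ : σ₁ → σ₁ → Prop) (F₁ : σ₁ → Prop)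
    (T₂ : σ₂ → σ₂ → Prop) (F₂ : σ₂ → Prop)
    (hFinFix₁ : ∀ v v', F₁ v → T₁ v v' → v' = v) (hFinLoop₁ : ∀ v, F₁ v → T₁ v v)
    (hFinFix₂ : ∀ v v', F₂ v → T₂ v v' → v' = v) (hFinLoop₂ : ∀ v, F₂ v → T₂ v v)
    (pre post : σ₁ → σ₂ → Prop)
    (U₂ : R → σ₂ → σ₂ → Prop)
    (hU₂T : ∀ w w', T₂ w w' ↔ ∃ r, U₂ r w w')
    (hU₂fun : ∀ r w w' w'', U₂ r w w' → U₂ r w w'' → w' = w'')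
    (hU₂tot : ∀ r w, ∃ w', U₂ r w w')
    (f : σ₁ × σ₂ → R)
    (hdet : ∀ v₁ v₂ v₁' w', pre v₁ v₂ → Reach T₁ F₁ v₁ v₁' →
      Reach (DetT U₂ f) (DetF F₂) (v₁', v₂) (v₁', w') → post v₁' w') :
    ∀ v₁ v₂ v₁', pre v₁ v₂ → Reach T₁ F₁ v₁ v₁' →
      (∃ v₂', Reach T₂ F₂ v₂ v₂' ∧ post v₁' v₂') ∨ Diverge T₂ F₂ v₂ :=
  tigni_determinization_sound_general T₁ F₁ T₂ F₂ pre post U₂ hU₂T hU₂tot f hdet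
end

section
/- Well-foundedness of the template for well-founded predicate variables (claimed for the stratified template family T_X^↓ of Fig. 4): Let α be a type, np, nl ∈ ℕ, r : Fin np → Fin nl → α → ℤ a family of ranking functions, and D : Fin np → α → Prop a family of discriminators. Define DEC(i, j, x, y) := ∃ k : Fin nl, r(i, k)(x) > r(j, k)(y) ∧ ∀ ℓ < k, r(i, ℓ)(x) ≥ r(j, ℓ)(y), and define W(x, y) := (∀ i k, r(i, k)(x) ≥ 0) ∧ (∃ i, D(i)(x)) ∧ (∃ j, D(j)(y)) ∧ (∃ i, D(i)(x) ∧ ∀ j, D(j)(y) → DEC(i, j, x, y)). Then there is no infinite sequence x_0, x_1, … in α with W(x_n, x_{n+1}) for all n ≥ 0. -/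
/-!
Along a chain `x₀, x₁, …`, pick at each step a region `iₙ` witnessing the last conjunct of the
template. Since ranks are nonnegative, the vectors `(r iₙ k xₙ)ₖ` are elements of `ℕ^nl`, and
`DEC` makes them strictly decrease lexicographically, which is impossible in a well-order.
-/

/-- `DEC i j x y`: the lexicographic ranking value of region `i` at `x` is
strictly greater than that of region `j` at `y`. -/
def DEC {α : Type*} {np nl : ℕ} (r : Fin np → Fin nl → α → ℤ)
    (i j : Fin np) (x y : α) : Prop :=
  ∃ k : Fin nl, r i k x > r j k y ∧ ∀ ℓ : Fin nl, ℓ < k → r i ℓ x ≥ r j ℓ y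

/-- The relation denoted by the stratified template family `T_X^↓` for
well-founded predicate variables (Fig. 4 of the paper). -/
def TemplateWF {α : Type*} {np nl : ℕ} (r : Fin np → Fin nl → α → ℤ)
    (D : Fin np → α → Prop) (x y : α) : Prop :=
  (∀ i k, r i k x ≥ 0) ∧
  (∃ i, D i x) ∧
  (∃ j, D j y) ∧
  (∃ i, D i x ∧ ∀ j, D j y → DEC r i j x y)

/-- The first index where `a` and `b` differ is at most `k`, and there `a < b`. -/
theorem Pi.toLex_lt_of_le_of_lt {ι β : Type*} [LinearOrder ι] [WellFoundedLT ι] [LinearOrder β]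
    {a b : ι → β} {k : ι} (hle : ∀ ℓ < k, a ℓ ≤ b ℓ) (hlt : a k < b k) :
    toLex a < toLex b := by
  obtain ⟨m, hm, hmin⟩ := wellFounded_lt.has_min {ℓ | a ℓ ≠ b ℓ} ⟨k, hlt.ne⟩
  have hmk : m ≤ k := not_lt.1 fun hkm => hmin k hlt.ne hkm
  refine ⟨m, fun ℓ hℓ => not_not.1 fun hne => hmin ℓ hne hℓ, ?_⟩
  rcases hmk.eq_or_lt with rfl | hmk
  · exact hlt
  · exact (hle m hmk).lt_of_ne hm

section Template

variable {α : Type*} {np nl : ℕ} (r : Fin np → Fin nl → α → ℤ)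

/-- Read in `ℕ` to land in a well-order; `Int.toNat` truncates negative ranks to `0`, which is
harmless because the template forces every rank to be nonnegative. -/
def lexRank (i : Fin np) (x : α) : Lex (Fin nl → ℕ) :=
  toLex fun k => (r i k x).toNat

variable {r}

theorem DEC.lexRank_lt {i j : Fin np} {x y : α} (hy : ∀ k, 0 ≤ r j k y)
    (h : DEC r i j x y) : lexRank r j y < lexRank r i x := by
  obtain ⟨k, hk, hbelow⟩ := h
  refine Pi.toLex_lt_of_le_of_lt (k := k) (fun ℓ hℓ => ?_) ?_
  · exact Int.toNat_le_toNat (hbelow ℓ hℓ)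
  · exact (Int.toNat_lt_toNat (lt_of_le_of_lt (hy k) hk)).2 hk

end Template

/-- Well-foundedness of the template for well-founded predicate variables:
any instantiation of `T_X^↓` denotes a well-founded relation (no infinite
descending chain). -/
theorem wf_template_wellfounded
    {α : Type*} (np nl : ℕ)
    (r : Fin np → Fin nl → α → ℤ)
    (D : Fin np → α → Prop) :
    ¬ ∃ x : ℕ → α, ∀ n : ℕ, TemplateWF r D (x n) (x (n + 1)) := by
  rintro ⟨x, hx⟩
  choose i hDi hDEC using fun n => (hx n).2.2.2
  have hrank : StrictAnti fun n => lexRank r (i n) (x n) :=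
    strictAnti_nat_of_succ_lt fun n =>
      DEC.lexRank_lt ((hx (n + 1)).1 (i (n + 1))) (hDEC n (i (n + 1)) (hDi (n + 1)))
  exact not_strictAnti_of_wellFoundedLT _ hrank
end

section
/- Well-foundedness of the refined template for well-founded predicate variables (Appendix H): Let α be a type, np, nl ∈ ℕ, r : Fin np → Fin nl → α → ℤ a family of ranking functions, and D : Fin np → α → Prop a family of discriminators. Define DEC'(i, j, x, y) := ∃ k : Fin nl, r(i, k)(x) ≥ 0 ∧ r(i, k)(x) > r(j, k)(y) ∧ ∀ ℓ < k, ((r(i, ℓ)(x) < 0 ∧ r(j, ℓ)(y) < 0) ∨ r(i, ℓ)(x) ≥ r(j, ℓ)(y)), and define W'(x, y) := (∃ j, D(j)(y)) ∧ (∃ i, D(i)(x) ∧ ∀ j, D(j)(y) → DEC'(i, j, x, y)). Then there is no infinite sequence x_0, x_1, … in α with W'(x_n, x_{n+1}) for all n ≥ 0. -/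
/-!
Send a state `x`, tagged with a discriminator index `i` it satisfies, to the vector
`ℓ ↦ max (r i ℓ x) (-1) + 1` of natural numbers. A `DEC'` step strictly decreases this vector
in the lexicographic order on `Fin nl → ℕ`, which is well-founded, so no infinite chain exists.
-/

/-- `DEC' i j x y`: the refined lexicographic decrease condition of the
template of Appendix H. -/
def DEC' {α : Type*} {np nl : ℕ} (r : Fin np → Fin nl → α → ℤ)
    (i j : Fin np) (x y : α) : Prop :=
  ∃ k : Fin nl, r i k x ≥ 0 ∧ r i k x > r j k y ∧
    ∀ ℓ : Fin nl, ℓ < k →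
      ((r i ℓ x < 0 ∧ r j ℓ y < 0) ∨ r i ℓ x ≥ r j ℓ y)

/-- The relation denoted by the refined stratified template family `T_X^↓`
for well-founded predicate variables (Appendix H of the paper). -/
def TemplateWF' {α : Type*} {np nl : ℕ} (r : Fin np → Fin nl → α → ℤ)
    (D : Fin np → α → Prop) (x y : α) : Prop :=
  (∃ j, D j y) ∧
  (∃ i, D i x ∧ ∀ j, D j y → DEC' r i j x y)

theorem Pi.toLex_lt_toLex_of_le_of_lt {ι : Type*} [LinearOrder ι] [WellFoundedLT ι]
    {β : ι → Type*} [∀ i, PartialOrder (β i)] {x y : ∀ i, β i} {k : ι}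
    (hle : ∀ j < k, x j ≤ y j) (hlt : x k < y k) : toLex x < toLex y := by
  obtain ⟨i, hi, hmin⟩ := wellFounded_lt.has_min {j | x j ≠ y j} ⟨k, hlt.ne⟩
  have hik : i ≤ k := not_lt.mp fun hki => hmin k hlt.ne hki
  refine ⟨i, fun j hj => not_not.mp fun hne => hmin j hne hj, ?_⟩
  rcases hik.lt_or_eq with hik | rfl
  · exact (hle i hik).lt_of_ne hi
  · exact hlt

/-- The paper's refined rank `if z ≥ 0 then z else -1`, shifted by one so that it lands in `ℕ`. -/
def truncRank (z : ℤ) : ℕ := (z + 1).toNat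

def rankVector {α : Type*} {np nl : ℕ} (r : Fin np → Fin nl → α → ℤ) (i : Fin np) (x : α) :
    Lex (Fin nl → ℕ) :=
  toLex fun ℓ => truncRank (r i ℓ x)

theorem DEC'.rankVector_lt {α : Type*} {np nl : ℕ} {r : Fin np → Fin nl → α → ℤ}
    {i j : Fin np} {x y : α} (h : DEC' r i j x y) : rankVector r j y < rankVector r i x := by
  obtain ⟨k, hk_nonneg, hk_lt, hprefix⟩ := h
  refine Pi.toLex_lt_toLex_of_le_of_lt (k := k) (fun ℓ hℓ => ?_) ?_
  · rcases hprefix ℓ hℓ with ⟨_, _⟩ | _ <;> simp only [truncRank] <;> omega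
  · simp only [truncRank]
    omega

/-- Well-foundedness of the refined template for well-founded predicate
variables: any instantiation still denotes a well-founded relation (no
infinite descending chain). -/
theorem wf_refined_template_wellfounded
    {α : Type*} (np nl : ℕ)
    (r : Fin np → Fin nl → α → ℤ)
    (D : Fin np → α → Prop) :
    ¬ ∃ x : ℕ → α, ∀ n : ℕ, TemplateWF' r D (x n) (x (n + 1)) := by
  rintro ⟨x, hx⟩
  choose i hDi hdec using fun n => (hx n).2
  have hanti : StrictAnti fun n => rankVector r (i n) (x n) :=
    strictAnti_nat_of_succ_lt fun n => (hdec n _ (hDi (n + 1))).rankVector_lt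
  exact not_strictAnti_of_wellFoundedLT _ hanti
end

section
/- No finite unsatisfiability witness in the presence of a well-founded predicate variable (witnessing the paper's claim in Appendix F): (a) There is no relation W on ℤ such that W(n, n+1) holds for every n ∈ ℤ and W admits no infinite sequence v : ℕ → ℤ with W(v(j), v(j+1)) for all j ≥ 0; (b) yet for every finite set S ⊆ ℤ there exists a relation W on ℤ with W(n, n+1) for every n ∈ S that admits no infinite sequence v : ℕ → ℤ with W(v(j), v(j+1)) for all j ≥ 0. -/
theorem not_noInfChain_of_forall_rel_apply {τ : Type*} {W : τ → τ → Prop} (f : τ → τ)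
    (h : ∀ x, W x (f x)) (x₀ : τ) : ¬ NoInfChain W :=
  fun hW => hW ⟨fun n => f^[n] x₀, fun j => by
    simpa only [Function.iterate_succ_apply'] using h (f^[j] x₀)⟩

theorem noInfChain_mem_and_lt {α : Type*} [Preorder α] {s : Set α} (hs : s.Finite) :
    NoInfChain (fun a b : α => a ∈ s ∧ a < b) := by
  rintro ⟨v, hv⟩
  have hmono : StrictMono v := strictMono_nat_of_lt_succ fun j => (hv j).2
  exact Set.infinite_of_injective_forall_mem hmono.injective (fun j => (hv j).1) hs

/-- No finite unsatisfiability witness in the presence of a well-founded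
predicate variable (Appendix F): (a) no well-founded relation on ℤ contains
all successor pairs, yet (b) for every finite set of successor pairs there is
a well-founded relation containing them. -/
theorem no_finite_unsat_witness_for_wf :
    (¬ ∃ W : ℤ → ℤ → Prop, (∀ n : ℤ, W n (n + 1)) ∧ NoInfChain W) ∧
    (∀ S : Finset ℤ, ∃ W : ℤ → ℤ → Prop,
      (∀ n ∈ S, W n (n + 1)) ∧ NoInfChain W) := by
  constructor
  · rintro ⟨W, hsucc, hW⟩
    exact not_noInfChain_of_forall_rel_apply (· + 1) hsucc 0 hW
  · intro S
    exact ⟨fun a b => a ∈ S ∧ a < b, fun n hn => ⟨hn, lt_add_one n⟩,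
      noInfChain_mem_and_lt S.finite_toSet⟩
end
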